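/- arXiv:2306.13063 — 3 statements merged into one kernel-verified Lean document; each statement's English description precedes it below -/
import Mathlib

section
/- Prefix marginalization for sampling without replacement: for every K ≤ m, every j ≤ K, and every injective sequence t : Fin j → α, the sum of W(s) over all injective sequences s : Fin K → α whose first j entries agree with t equals ∏_{l=0}^{j-1} p(t l) / (1 - ∑_{r<l} p(t r)). In other words, the probability that the first j draws equal the fixed prefix t is the Plackett–Luce weight of t itself. -/
open Finset

open scoped Classical

/-- The Plackett–Luce weight of a sequence `s : Fin K → α` of draws without replacement
from the categorical distribution `p`:
`W(s) = ∏_{j=0}^{K-1} p(s j) / (1 - ∑_{l<j} p(s l))`. -/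
noncomputable def plWeight {α : Type*} [Fintype α] (p : α → ℝ) {K : ℕ} (s : Fin K → α) : ℝ :=
  ∏ j : Fin K, p (s j) / (1 - ∑ l ∈ univ.filter (fun l => l < j), p (s l))

private lemma filter_lt_castSucc {j : ℕ} (l0 : Fin j) :
    (univ : Finset (Fin (j+1))).filter (fun r => r < l0.castSucc)
      = (univ.filter (fun r => r < l0)).image Fin.castSucc := by
  ext r
  simp only [mem_filter, mem_univ, true_and, mem_image, Fin.lt_def, Fin.coe_castSucc]
  constructor
  · intro h
    exact ⟨⟨r.val, h.trans l0.isLt⟩, h, Fin.ext rfl⟩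
  · rintro ⟨r0, h, rfl⟩
    exact h

private lemma filter_lt_last {j : ℕ} :
    (univ : Finset (Fin (j+1))).filter (fun r => r < Fin.last j)
      = univ.image Fin.castSucc := by
  ext r
  simp only [mem_filter, mem_univ, true_and, mem_image, Fin.lt_def, Fin.val_last]
  constructor
  · intro h
    exact ⟨⟨r.val, h⟩, Fin.ext rfl⟩
  · rintro ⟨r0, rfl⟩
    exact r0.isLt

private lemma snoc_injective {α : Type*} {j : ℕ} {t : Fin j → α}
    (ht : Function.Injective t) {a : α} (ha : ∀ i, t i ≠ a) :
    Function.Injective (Fin.snoc t a : Fin (j+1) → α) := by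
  intro x y hxy
  induction x using Fin.lastCases with
  | last =>
    induction y using Fin.lastCases with
    | last => rfl
    | cast y0 =>
      rw [Fin.snoc_last, Fin.snoc_castSucc] at hxy
      exact absurd hxy.symm (ha y0)
  | cast x0 =>
    induction y using Fin.lastCases with
    | last =>
      rw [Fin.snoc_last, Fin.snoc_castSucc] at hxy
      exact absurd hxy (ha x0)
    | cast y0 =>
      rw [Fin.snoc_castSucc, Fin.snoc_castSucc] at hxy
      rw [ht hxy]

/-- Prefix marginalization for sampling without replacement: for `K ≤ m`, `j ≤ K`, and an
injective prefix `t : Fin j → α`, the sum of `W(s)` over all injective `s : Fin K → α`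
whose first `j` entries agree with `t` equals the Plackett–Luce weight of `t` itself,
`∏_{l=0}^{j-1} p(t l) / (1 - ∑_{r<l} p(t r))`. -/
theorem plackettLuce_prefix_marginal {α : Type*} [Fintype α] (p : α → ℝ)
    (hp : ∀ a, 0 < p a) (hsum : ∑ a, p a = 1)
    (K : ℕ) (hK : K ≤ Fintype.card α)
    (j : ℕ) (hj : j ≤ K) (t : Fin j → α) (ht : Function.Injective t) :
    ∑ s ∈ (univ : Finset (Fin K → α)).filter
        (fun s => Function.Injective s ∧ ∀ i : Fin j, s (Fin.castLE hj i) = t i),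
      plWeight p s
      = ∏ l : Fin j, p (t l) / (1 - ∑ r ∈ univ.filter (fun r => r < l), p (t r)) := by
  obtain ⟨n, hn⟩ : ∃ n, j + n = K := ⟨K - j, by omega⟩
  induction n generalizing j with
  | zero =>
    -- j = K, the filter is the singleton {t}
    have hjK : j = K := by omega
    subst hjK
    have hfil : (univ : Finset (Fin j → α)).filter
        (fun s => Function.Injective s ∧ ∀ i : Fin j, s (Fin.castLE hj i) = t i) = {t} := by
      ext s
      simp only [mem_filter, mem_univ, true_and, mem_singleton]
      constructor
      · rintro ⟨-, h2⟩
        funext x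
        have := h2 x
        simpa [Fin.castLE] using this
      · rintro rfl
        exact ⟨ht, fun i => rfl⟩
    rw [hfil, sum_singleton]
    rfl
  | succ n IH =>
    have hjK : j < K := by omega
    set S : ℝ := ∑ l : Fin j, p (t l) with hS
    have himage : ∑ a ∈ (univ.image t)ᶜ, p a = 1 - S := by
      have h1 : ∑ a ∈ univ.image t, p a = S := by
        rw [sum_image (fun x _ y _ h => ht h)]
      have := sum_add_sum_compl (univ.image t) p
      rw [h1, hsum] at this
      linarith
    have hSlt : S < 1 := by
      have hne : (univ.image t) ≠ univ := by
        intro h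
        have := card_image_of_injective (univ : Finset (Fin j)) ht
        rw [h] at this
        simp only [card_univ, Fintype.card_fin] at this
        omega
      have hex : ∃ a0, a0 ∉ univ.image t := by
        by_contra h
        push_neg at h
        exact hne (eq_univ_iff_forall.mpr h)
      obtain ⟨a0, ha0⟩ := hex
      have : 0 < ∑ a ∈ (univ.image t)ᶜ, p a :=
        sum_pos' (fun a _ => (hp a).le) ⟨a0, by simpa using ha0, hp a0⟩
      linarith
    have hS1 : (1 : ℝ) - S ≠ 0 := by linarith
    have hj1 : j + 1 ≤ K := hjK
    -- fiberwise decomposition over the value of s at position j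
    have hmaps : ∀ s ∈ (univ : Finset (Fin K → α)).filter
        (fun s => Function.Injective s ∧ ∀ i : Fin j, s (Fin.castLE hj i) = t i),
        s ⟨j, hjK⟩ ∈ (univ.image t)ᶜ := by
      intro s hs
      rw [mem_filter] at hs
      obtain ⟨-, hinj, hpre⟩ := hs
      simp only [mem_compl, mem_image, mem_univ, true_and, not_exists]
      intro i hi
      rw [← hpre i] at hi
      have := hinj hi
      have : (Fin.castLE hj i).val = j := by rw [this]
      simp only [Fin.coe_castLE] at this
      omega
    rw [← sum_fiberwise_of_maps_to hmaps (plWeight p)]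
    have hfiber : ∀ a ∈ (univ.image t)ᶜ,
        ∑ s ∈ ((univ : Finset (Fin K → α)).filter
            (fun s => Function.Injective s ∧ ∀ i : Fin j, s (Fin.castLE hj i) = t i)).filter
            (fun s => s ⟨j, hjK⟩ = a),
          plWeight p s
        = (∏ l : Fin j, p (t l) / (1 - ∑ r ∈ univ.filter (fun r => r < l), p (t r)))
            * (p a / (1 - S)) := by
      intro a ha
      have hanot : ∀ i, t i ≠ a := by
        intro i hi
        simp only [mem_compl, mem_image, mem_univ, true_and, not_exists] at ha
        exact ha i hi
      have hset : ((univ : Finset (Fin K → α)).filter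
            (fun s => Function.Injective s ∧ ∀ i : Fin j, s (Fin.castLE hj i) = t i)).filter
            (fun s => s ⟨j, hjK⟩ = a)
          = (univ : Finset (Fin K → α)).filter
            (fun s => Function.Injective s ∧
              ∀ i : Fin (j+1), s (Fin.castLE hj1 i) = Fin.snoc t a i) := by
        ext s
        simp only [mem_filter, mem_univ, true_and]
        constructor
        · rintro ⟨⟨hinj, hpre⟩, hlast⟩
          refine ⟨hinj, fun i => ?_⟩
          induction i using Fin.lastCases with
          | last =>
            rw [Fin.snoc_last]
            convert hlast using 2
            exact Fin.ext rfl
          | cast i0 =>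
            rw [Fin.snoc_castSucc]
            have : Fin.castLE hj1 (Fin.castSucc i0) = Fin.castLE hj i0 := Fin.ext rfl
            rw [this]
            exact hpre i0
        · rintro ⟨hinj, hpre⟩
          refine ⟨⟨hinj, fun i => ?_⟩, ?_⟩
          · have := hpre (Fin.castSucc i)
            rw [Fin.snoc_castSucc] at this
            have heq : Fin.castLE hj1 (Fin.castSucc i) = Fin.castLE hj i := Fin.ext rfl
            rw [heq] at this
            exact this
          · have := hpre (Fin.last j)
            rw [Fin.snoc_last] at this
            convert this using 2
            exact Fin.ext rfl
      rw [hset]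
      have hsnocinj : Function.Injective (Fin.snoc t a : Fin (j+1) → α) :=
        snoc_injective ht hanot
      rw [IH (j+1) hj1 (Fin.snoc t a) hsnocinj (by omega)]
      rw [Fin.prod_univ_castSucc]
      congr 1
      · refine Finset.prod_congr rfl fun l0 _ => ?_
        rw [Fin.snoc_castSucc]
        congr 2
        rw [filter_lt_castSucc, sum_image (fun x _ y _ h => Fin.castSucc_injective _ h)]
        exact Finset.sum_congr rfl fun r _ => by rw [Fin.snoc_castSucc]
      · rw [Fin.snoc_last]
        congr 2
        rw [filter_lt_last, sum_image (fun x _ y _ h => Fin.castSucc_injective _ h)]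
        rw [hS]
        exact Finset.sum_congr rfl fun r _ => by rw [Fin.snoc_castSucc]
    rw [sum_congr rfl hfiber, ← mul_sum, ← sum_div, himage, div_self hS1, mul_one]
end

section
/- Proposition 3.1: suppose the Top-K answers are drawn without replacement from the categorical distribution p, i.e., the injective sequence s : Fin K → α is distributed according to the Plackett–Luce weights W. Let u ≠ v be elements of α, let E(s) be the event that at least one of u, v occurs among the entries of s, and say 'u precedes v in s' if u occurs in s and either v does not occur in s or the first occurrence of u in s is at an earlier position than the first occurrence of v. Then the conditional probability that u precedes v given E equals p(u)/(p(u)+p(v)); that is, (∑_{s : u precedes v in s} W(s)) / (∑_{s : E(s)} W(s)) = p(u) / (p(u) + p(v)). -/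
open Finset

open scoped Classical

/-- `u` precedes `v` in the sequence `s`: `u` occurs in `s`, and either `v` does not occur
in `s`, or `u` occurs at an earlier position than `v`. -/
def precedes {α : Type*} (u v : α) {K : ℕ} (s : Fin K → α) : Prop :=
  (∃ i, s i = u) ∧ ((∀ i, s i ≠ v) ∨ ∃ i k : Fin K, s i = u ∧ s k = v ∧ i < k)


/-!
Conditioning on the first draw: from a support `A` of mass `T`, the first draw is `a` with
probability `p a / T`, and the remaining draws are a Plackett–Luce sample from `A \ {a}`.
If `u` is drawn first, `u` precedes `v` whatever follows, and the remaining sample has total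
mass `1`; if `v` is drawn first, it does not; otherwise the question passes to the remaining
sample. By induction on `K`, the masses `N(u, v)` and `N(v, u)` of the samples in which `u`
precedes `v`, resp. `v` precedes `u`, satisfy `p v * N(u, v) = p u * N(v, u)`. For injective
samples, the event that `u` or `v` occurs is the disjoint union of these two events.
-/

namespace PlackettLuce

section

variable {α : Type*}

lemma precedes_cons_iff {u v a : α} (huv : u ≠ v) {K : ℕ} {t : Fin K → α} (ht : ∀ j, t j ≠ a) :
    precedes u v (Fin.cons a t : Fin (K + 1) → α) ↔ a = u ∨ a ≠ v ∧ precedes u v t := by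
  simp only [precedes, Fin.exists_fin_succ, Fin.forall_fin_succ, Fin.cons_zero, Fin.cons_succ,
    Fin.succ_lt_succ_iff, Fin.succ_pos, Fin.not_lt_zero]
  grind

lemma not_precedes_of_precedes {u v : α} {K : ℕ} {s : Fin K → α} (hs : Function.Injective s)
    (h : precedes u v s) : ¬precedes v u s := by
  unfold precedes at *
  grind [Function.Injective]

lemma exists_eq_or_exists_eq_iff_precedes_or_precedes {u v : α} (huv : u ≠ v) {K : ℕ}
    {s : Fin K → α} : ((∃ i, s i = u) ∨ ∃ i, s i = v) ↔ precedes u v s ∨ precedes v u s := by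
  unfold precedes
  grind

variable (p : α → ℝ)

noncomputable def plWeightOn (A : Finset α) {K : ℕ} (s : Fin K → α) : ℝ :=
  ∏ j : Fin K, p (s j) / (∑ a ∈ A, p a - ∑ l ∈ univ.filter (fun l => l < j), p (s l))

lemma plWeightOn_cons {A : Finset α} {a : α} (ha : a ∈ A) {K : ℕ} (t : Fin K → α) :
    plWeightOn p A (Fin.cons a t : Fin (K + 1) → α)
      = p a / (∑ x ∈ A, p x) * plWeightOn p (A.erase a) t := by
  have hprefix (j : Fin K) :
      ∑ l ∈ univ.filter (· < j.succ), p ((Fin.cons a t : Fin (K + 1) → α) l)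
        = p a + ∑ l ∈ univ.filter (· < j), p (t l) := by
    simp [Finset.sum_filter, Fin.sum_univ_succ, Fin.succ_lt_succ_iff, Fin.succ_pos]
  simp only [plWeightOn, Fin.prod_univ_succ, Fin.cons_zero, Fin.cons_succ, hprefix,
    Fin.not_lt_zero, Finset.filter_false, Finset.sum_empty, sub_zero,
    Finset.sum_erase_eq_sub ha, sub_sub]

end

variable {α : Type*} [Fintype α]

lemma plWeight_eq_plWeightOn_univ {p : α → ℝ} (hsum : ∑ a, p a = 1) {K : ℕ} (s : Fin K → α) :
    plWeight p s = plWeightOn p univ s := by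
  rw [plWeight, plWeightOn, hsum]

noncomputable def injSeqs (A : Finset α) (K : ℕ) : Finset (Fin K → α) :=
  univ.filter fun s => Function.Injective s ∧ ∀ j, s j ∈ A

lemma cons_mem_injSeqs_iff {A : Finset α} {K : ℕ} {a : α} {t : Fin K → α} :
    Fin.cons a t ∈ injSeqs A (K + 1) ↔ a ∈ A ∧ t ∈ injSeqs (A.erase a) K := by
  simp only [injSeqs, Finset.mem_filter, Finset.mem_univ, true_and, Fin.cons_injective_iff,
    Fin.forall_fin_succ, Fin.cons_zero, Fin.cons_succ, Finset.mem_erase, Set.mem_range]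
  grind

lemma sum_injSeqs_succ {M : Type*} [AddCommMonoid M] (A : Finset α) (K : ℕ)
    (g : (Fin (K + 1) → α) → M) :
    ∑ s ∈ injSeqs A (K + 1), g s = ∑ a ∈ A, ∑ t ∈ injSeqs (A.erase a) K, g (Fin.cons a t) := by
  rw [← Finset.sum_ite_mem_eq, ← Fintype.sum_equiv (Fin.consEquiv fun _ => α)
    (fun x => if Fin.cons x.1 x.2 ∈ injSeqs A (K + 1) then g (Fin.cons x.1 x.2) else 0) _
    fun _ => rfl, Fintype.sum_prod_type]
  simp only [cons_mem_injSeqs_iff, ite_and, Finset.sum_ite_irrel, Finset.sum_const_zero,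
    Finset.sum_ite_mem_eq]

variable {p : α → ℝ}

lemma plWeightOn_pos (hp : ∀ a, 0 < p a) {A : Finset α} {K : ℕ} {s : Fin K → α}
    (hs : s ∈ injSeqs A K) : 0 < plWeightOn p A s := by
  induction K generalizing A with
  | zero => simp [plWeightOn]
  | succ K ih =>
    induction s using Fin.consCases with
    | cons a t =>
      obtain ⟨ha, ht⟩ := cons_mem_injSeqs_iff.1 hs
      rw [plWeightOn_cons p ha]
      exact mul_pos (div_pos (hp a) (Finset.sum_pos (fun x _ => hp x) ⟨a, ha⟩)) (ih ht)

lemma sum_plWeightOn_injSeqs (hp : ∀ a, 0 < p a) {A : Finset α} {K : ℕ} (hK : K ≤ #A) :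
    ∑ s ∈ injSeqs A K, plWeightOn p A s = 1 := by
  induction K generalizing A with
  | zero => simp [injSeqs, plWeightOn, Function.injective_of_subsingleton]
  | succ K ih =>
    have hA : 0 < ∑ x ∈ A, p x :=
      Finset.sum_pos (fun x _ => hp x) (Finset.card_pos.1 (by omega))
    calc ∑ s ∈ injSeqs A (K + 1), plWeightOn p A s
        = ∑ a ∈ A, p a / (∑ x ∈ A, p x) *
            ∑ t ∈ injSeqs (A.erase a) K, plWeightOn p (A.erase a) t := by
          rw [sum_injSeqs_succ]
          refine Finset.sum_congr rfl fun a ha => ?_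
          simp only [plWeightOn_cons p ha, Finset.mul_sum]
      _ = ∑ a ∈ A, p a / (∑ x ∈ A, p x) := by
          refine Finset.sum_congr rfl fun a ha => ?_
          rw [ih (by rw [Finset.card_erase_of_mem ha]; omega), mul_one]
      _ = 1 := by rw [← Finset.sum_div, div_self hA.ne']

variable (p) in
noncomputable def precedesMass (A : Finset α) (K : ℕ) (u v : α) : ℝ :=
  ∑ s ∈ (injSeqs A K).filter (precedes u v), plWeightOn p A s

lemma precedesMass_succ {A : Finset α} {u v : α} (hu : u ∈ A) (hv : v ∈ A) (huv : u ≠ v)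
    (K : ℕ) :
    precedesMass p A (K + 1) u v
      = p u / (∑ x ∈ A, p x) * ∑ t ∈ injSeqs (A.erase u) K, plWeightOn p (A.erase u) t
        + ∑ a ∈ (A.erase u).erase v, p a / (∑ x ∈ A, p x) * precedesMass p (A.erase a) K u v := by
  have hfirst : ∀ a ∈ A, ∑ t ∈ injSeqs (A.erase a) K,
      (if precedes u v (Fin.cons a t) then plWeightOn p A (Fin.cons a t) else 0)
        = p a / (∑ x ∈ A, p x) * ∑ t ∈ injSeqs (A.erase a) K,
          if a = u ∨ a ≠ v ∧ precedes u v t then plWeightOn p (A.erase a) t else 0 := by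
    intro a ha
    rw [Finset.mul_sum]
    refine Finset.sum_congr rfl fun t ht => ?_
    have hta : ∀ j, t j ≠ a := fun j => Finset.ne_of_mem_erase ((Finset.mem_filter.1 ht).2.2 j)
    simp only [precedes_cons_iff huv hta, plWeightOn_cons p ha, mul_ite, mul_zero]
  rw [precedesMass, Finset.sum_filter, sum_injSeqs_succ, Finset.sum_congr rfl hfirst,
    ← Finset.add_sum_erase A _ hu,
    ← Finset.add_sum_erase (A.erase u) _ (Finset.mem_erase.2 ⟨huv.symm, hv⟩)]
  simp only [true_or, if_true, huv.symm, false_or, ne_eq, not_true_eq_false, false_and,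
    if_false, Finset.sum_const_zero, mul_zero, zero_add]
  congr 1
  refine Finset.sum_congr rfl fun a ha => ?_
  have hav : ¬a = v := Finset.ne_of_mem_erase ha
  have hau : ¬a = u := Finset.ne_of_mem_erase (Finset.mem_of_mem_erase ha)
  simp only [precedesMass, Finset.sum_filter, hau, hav, false_or, not_false_eq_true, true_and]

lemma mul_precedesMass_comm (hp : ∀ a, 0 < p a) {A : Finset α} {u v : α} (hu : u ∈ A)
    (hv : v ∈ A) (huv : u ≠ v) {K : ℕ} (hK : K ≤ #A) :
    p v * precedesMass p A K u v = p u * precedesMass p A K v u := by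
  induction K generalizing A with
  | zero =>
    have hnil : ∀ (w z : α) (s : Fin 0 → α), ¬precedes w z s := fun _ _ _ ⟨⟨i, _⟩, _⟩ => i.elim0
    simp [precedesMass, hnil]
  | succ K ih =>
    have hcard : ∀ a ∈ A, K ≤ #(A.erase a) := fun a ha => by
      rw [Finset.card_erase_of_mem ha]; omega
    rw [precedesMass_succ hu hv huv, precedesMass_succ hv hu huv.symm,
      sum_plWeightOn_injSeqs hp (hcard u hu), sum_plWeightOn_injSeqs hp (hcard v hv),
      Finset.erase_right_comm, mul_add, mul_add, Finset.mul_sum, Finset.mul_sum]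
    congr 1
    · ring
    refine Finset.sum_congr rfl fun a ha => ?_
    have hau : a ≠ u := Finset.ne_of_mem_erase ha
    have hav : a ≠ v := Finset.ne_of_mem_erase (Finset.mem_of_mem_erase ha)
    have haA : a ∈ A := Finset.mem_of_mem_erase (Finset.mem_of_mem_erase ha)
    have hrest := ih (Finset.mem_erase.2 ⟨hau.symm, hu⟩) (Finset.mem_erase.2 ⟨hav.symm, hv⟩)
      (hcard a haA)
    linear_combination p a / (∑ x ∈ A, p x) * hrest

lemma precedesMass_pos (hp : ∀ a, 0 < p a) {A : Finset α} {u v : α} (hu : u ∈ A) (hv : v ∈ A)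
    (huv : u ≠ v) {K : ℕ} (hK0 : 0 < K) (hK : K ≤ #A) : 0 < precedesMass p A K u v := by
  obtain ⟨K, rfl⟩ := Nat.exists_eq_add_of_lt hK0
  have hA : 0 < ∑ x ∈ A, p x := Finset.sum_pos (fun x _ => hp x) ⟨u, hu⟩
  rw [zero_add, precedesMass_succ hu hv huv,
    sum_plWeightOn_injSeqs hp (by rw [Finset.card_erase_of_mem hu]; omega), mul_one]
  refine add_pos_of_pos_of_nonneg (div_pos (hp u) hA) (Finset.sum_nonneg fun a _ => ?_)
  exact mul_nonneg (div_pos (hp a) hA).le (Finset.sum_nonneg fun s hs =>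
    (plWeightOn_pos hp (Finset.mem_filter.1 hs).1).le)

end PlackettLuce

open PlackettLuce in
/-- Proposition 3.1: if the Top-K answers `s : Fin K → α` are drawn without replacement
from the categorical distribution `p` (i.e. distributed according to the Plackett–Luce
weights `W`), then for `u ≠ v`, the conditional probability that `u` precedes `v` in `s`,
given the event `E` that at least one of `u`, `v` occurs among the entries of `s`,
equals `p u / (p u + p v)`. -/
theorem plackettLuce_pairwise_rank {α : Type*} [Fintype α] (p : α → ℝ)
    (hp : ∀ a, 0 < p a) (hsum : ∑ a, p a = 1)
    (u v : α) (huv : u ≠ v)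
    (K : ℕ) (hK1 : 1 ≤ K) (hK : K ≤ Fintype.card α) :
    (∑ s ∈ (univ : Finset (Fin K → α)).filter
        (fun s => Function.Injective s ∧ precedes u v s),
      plWeight p s)
    / (∑ s ∈ (univ : Finset (Fin K → α)).filter
        (fun s => Function.Injective s ∧ ((∃ i, s i = u) ∨ (∃ i, s i = v))),
      plWeight p s)
    = p u / (p u + p v) := by
  have hnum : univ.filter (fun s => Function.Injective s ∧ precedes u v s)
      = (injSeqs univ K).filter (precedes u v) := by
    ext s
    simp [injSeqs]
  have hden : univ.filter (fun s => Function.Injective s ∧ ((∃ i, s i = u) ∨ ∃ i, s i = v))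
      = (injSeqs univ K).filter (precedes u v) ∪ (injSeqs univ K).filter (precedes v u) := by
    ext s
    simp [injSeqs, exists_eq_or_exists_eq_iff_precedes_or_precedes huv, and_or_left]
  have hdisj : Disjoint ((injSeqs univ K).filter (precedes u v))
      ((injSeqs univ K).filter (precedes v u)) :=
    Finset.disjoint_filter.2 fun s hs => not_precedes_of_precedes (Finset.mem_filter.1 hs).2.1
  have hmass (w z : α) : ∑ s ∈ (injSeqs univ K).filter (precedes w z), plWeight p s
      = precedesMass p univ K w z := by
    simp only [precedesMass, plWeight_eq_plWeightOn_univ hsum]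
  have hpos_uv := precedesMass_pos hp (Finset.mem_univ u) (Finset.mem_univ v) huv hK1 hK
  have hpos_vu := precedesMass_pos hp (Finset.mem_univ v) (Finset.mem_univ u) huv.symm hK1 hK
  have hcomm := mul_precedesMass_comm hp (Finset.mem_univ u) (Finset.mem_univ v) huv hK
  rw [hnum, hden, Finset.sum_union hdisj, hmass, hmass,
    div_eq_div_iff (add_pos hpos_uv hpos_vu).ne' (add_pos (hp u) (hp v)).ne']
  linear_combination hcomm
end

section
/- Full-permutation special case of Proposition 3.1: when K = m (so each injective sequence s : Fin m → α is a permutation enumerating all of α and the event E holds for every s), for any u ≠ v in α the probability under the Plackett–Luce distribution that u appears at an earlier position than v equals p(u)/(p(u)+p(v)); that is, ∑_{s : s⁻¹(u) < s⁻¹(v)} W(s) = p(u) / (p(u) + p(v)). -/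
open Finset

open scoped Classical

namespace PLAux

lemma div_helper (a S c : ℝ) (hc : c ≠ 0) : (a / c) / (1 - S / c) = a / (c - S) := by
  rcases eq_or_ne (c - S) 0 with h | h
  · have hS : S / c = 1 := by
      rw [div_eq_one_iff_eq hc]
      linarith [sub_eq_zero.mp h]
    simp [h, hS]
  · field_simp

variable {n : ℕ} {β : Type*}

lemma sum_lt_zero (f : Fin (n + 1) → ℝ) :
    ∑ l ∈ univ.filter (fun l => l < (0 : Fin (n + 1))), f l = 0 := by
  rw [Finset.filter_false_of_mem (fun l _ => Fin.not_lt_zero l)]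
  simp

lemma sum_lt_succ (f : Fin (n + 1) → ℝ) (i : Fin n) :
    ∑ l ∈ univ.filter (fun l => l < Fin.succ i), f l
      = f 0 + ∑ l ∈ univ.filter (fun l => l < i), f (Fin.succ l) := by
  rw [Finset.sum_filter, Finset.sum_filter, Fin.sum_univ_succ]
  simp [Fin.succ_lt_succ_iff, Fin.succ_pos]

lemma plWeight_cons [Fintype β] (q : β → ℝ) (b : β) (hb : 1 - q b ≠ 0)
    (t : Fin n → {x : β // x ≠ b}) :
    plWeight q (fun i => Fin.cases b (fun j => (t j).1) i)
      = q b * plWeight (fun x : {x : β // x ≠ b} => q x.1 / (1 - q b)) t := by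
  unfold plWeight
  rw [Fin.prod_univ_succ]
  congr 1
  · simp [sum_lt_zero]
  · apply Finset.prod_congr rfl
    intro i _
    rw [sum_lt_succ]
    simp only [Fin.cases_succ, Fin.cases_zero]
    rw [← Finset.sum_div, div_helper _ _ _ hb,
      show (1 : ℝ) - (q b + ∑ l ∈ univ.filter (fun l => l < i), q (t l).1)
        = (1 - q b) - ∑ l ∈ univ.filter (fun l => l < i), q (t l).1 by ring]

variable {n : ℕ} {β : Type*}

noncomputable def glue (b : β) (t : Fin n ≃ {x : β // x ≠ b}) : Fin (n + 1) ≃ β where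
  toFun i := Fin.cases b (fun j => (t j).1) i
  invFun x := if h : x = b then 0 else (t.symm ⟨x, h⟩).succ
  left_inv i := by
    refine Fin.cases ?_ ?_ i
    · simp
    · intro j
      simp [(t j).2]
  right_inv x := by
    by_cases h : x = b
    · simp [h]
    · simp [h]

@[simp] lemma glue_zero (b : β) (t : Fin n ≃ {x : β // x ≠ b}) : glue b t 0 = b := rfl

@[simp] lemma glue_succ (b : β) (t : Fin n ≃ {x : β // x ≠ b}) (j : Fin n) :
    glue b t j.succ = (t j).1 := by
  show (Fin.cases b (fun j => (t j).1) j.succ : β) = _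
  simp

lemma glue_symm_same (b : β) (t : Fin n ≃ {x : β // x ≠ b}) : (glue b t).symm b = 0 := by
  simp [glue]

lemma glue_symm_ne (b : β) (t : Fin n ≃ {x : β // x ≠ b}) (x : β) (h : x ≠ b) :
    (glue b t).symm x = (t.symm ⟨x, h⟩).succ := by
  simp [glue, h]

def tailEquiv (s : Fin (n + 1) ≃ β) : Fin n ≃ {x : β // x ≠ s 0} where
  toFun i := ⟨s i.succ, fun h => Fin.succ_ne_zero i (s.injective h)⟩
  invFun x := (s.symm x.1).pred (fun h => x.2 ((Equiv.symm_apply_eq s).mp h))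
  left_inv i := by simp
  right_inv x := by
    apply Subtype.ext
    simp [Fin.succ_pred]

lemma glue_bijective :
    Function.Bijective
      (fun x : Σ b : β, (Fin n ≃ {y : β // y ≠ b}) => glue x.1 x.2) := by
  constructor
  · rintro ⟨b, t⟩ ⟨b', t'⟩ h
    have hb : b = b' := by
      have := congrArg (fun e : Fin (n + 1) ≃ β => e 0) h
      simpa using this
    subst hb
    have ht : t = t' := by
      apply Equiv.ext
      intro i
      apply Subtype.ext
      have := congrArg (fun e : Fin (n + 1) ≃ β => e i.succ) h
      simpa using this
    simp [ht]
  · intro s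
    refine ⟨⟨s 0, tailEquiv s⟩, ?_⟩
    apply Equiv.ext
    intro i
    refine Fin.cases ?_ ?_ i
    · simp
    · intro j
      simp [tailEquiv]


lemma sum_univ_congr {γ M : Type*} [AddCommMonoid M] (i1 i2 : Fintype γ) (f : γ → M) :
    (@Finset.univ γ i1).sum f = (@Finset.univ γ i2).sum f :=
  congrArg (fun i : Fintype γ => (@Finset.univ γ i).sum f) (Subsingleton.elim i1 i2)

lemma filter_univ_congr {γ : Type*} (i1 i2 : Fintype γ) (p : γ → Prop)
    (d1 d2 : DecidablePred p) :
    @Finset.filter γ p d1 (@Finset.univ γ i1) = @Finset.filter γ p d2 (@Finset.univ γ i2) := by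
  ext s
  simp only [Finset.mem_filter]
  exact ⟨fun h => ⟨@Finset.mem_univ γ i2 s, h.2⟩, fun h => ⟨@Finset.mem_univ γ i1 s, h.2⟩⟩

lemma sum_filter_univ_congr {γ M : Type*} [AddCommMonoid M] (i1 i2 : Fintype γ) (p : γ → Prop)
    (d1 d2 : DecidablePred p) (f : γ → M) :
    (@Finset.filter γ p d1 (@Finset.univ γ i1)).sum f
      = (@Finset.filter γ p d2 (@Finset.univ γ i2)).sum f := by
  rw [filter_univ_congr i1 i2 p d1 d2]

universe u

set_option maxHeartbeats 4000000 in
lemma pl_total : ∀ (n : ℕ) (β : Type u) [Fintype β] (q : β → ℝ),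
    Fintype.card β = n → (∀ a, 0 < q a) → (∑ a, q a) = 1 →
    ∑ s : Fin n ≃ β, plWeight q (fun j => s j) = 1 := by
  intro n
  induction n with
  | zero =>
    intro β _ q hcard hpos hsum
    haveI : IsEmpty β := Fintype.card_eq_zero_iff.mp hcard
    exact absurd hsum (by simp)
  | succ n ih =>
    intro β _ q hcard hpos hsum
    -- cardinality of the subtypes
    have hcard' : ∀ b : β, Fintype.card {x : β // x ≠ b} = n := by
      intro b
      have h1 := Fintype.card_subtype_compl (fun x : β => x = b)
      rw [Fintype.card_subtype_eq, hcard] at h1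
      simpa using h1
    rcases Nat.eq_zero_or_pos n with hn | hn
    · subst hn
      obtain ⟨b, hb⟩ := Fintype.card_eq_one_iff.mp hcard
      haveI hu : Unique β := ⟨⟨b⟩, hb⟩
      haveI : Unique (Fin 1 ≃ β) :=
        ⟨⟨Equiv.ofUnique (Fin 1) β⟩,
          fun e => Equiv.ext fun i => (hb _).trans (hb _).symm⟩
      have hx : ∀ x : β, q x = 1 := by
        intro x
        rw [← hsum, Fintype.sum_unique]
        exact congrArg q ((hb x).trans (hb default).symm)
      rw [Fintype.sum_unique]
      unfold plWeight
      rw [Fin.prod_univ_one, sum_lt_zero]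
      simpa using hx _
    · have hposb : ∀ b : β, 0 < 1 - q b := by
        intro b
        have h1 : q b + ∑ a ∈ univ.erase b, q a = ∑ a, q a :=
          Finset.add_sum_erase univ q (mem_univ b)
        have hne : (univ.erase b).Nonempty := by
          rw [← Finset.card_pos, Finset.card_erase_of_mem (mem_univ b),
            Finset.card_univ, hcard]
          omega
        have h2 : 0 < ∑ a ∈ univ.erase b, q a :=
          Finset.sum_pos (fun a _ => hpos a) hne
        rw [hsum] at h1
        linarith
      have hsub : ∀ b : β, ∑ x : {x : β // x ≠ b}, q x.1 = 1 - q b := by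
        intro b
        have h0 : ∑ a ∈ univ.filter (fun a => a ≠ b), q a
            = ∑ x : {x : β // x ≠ b}, q x.1 := by
          rw [Finset.sum_subtype (p := fun a : β => a ≠ b) (univ.filter (fun a => a ≠ b)) (by simp) q]
        rw [← h0, Finset.filter_ne', Finset.sum_erase_eq_sub (mem_univ b), hsum]
      have hq' : ∀ b : β, ∀ x : {x : β // x ≠ b}, 0 < q x.1 / (1 - q b) :=
        fun b x => div_pos (hpos x.1) (hposb b)
      have hq's : ∀ b : β, ∑ x : {x : β // x ≠ b}, q x.1 / (1 - q b) = 1 := by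
        intro b
        rw [← Finset.sum_div, hsub b, div_self (ne_of_gt (hposb b))]
      rw [← Fintype.sum_bijective _ glue_bijective
        (fun x : Σ b : β, (Fin n ≃ {y : β // y ≠ b}) =>
          plWeight q (fun j => (glue x.1 x.2) j))
        _ (fun x => rfl)]
      rw [← Finset.univ_sigma_univ, Finset.sum_sigma]
      have key : ∀ b : β, ∀ t : Fin n ≃ {y : β // y ≠ b},
          plWeight q (fun j => (glue b t) j)
            = q b * plWeight (fun x : {x : β // x ≠ b} => q x.1 / (1 - q b))
                (fun i => t i) := by
        intro b t
        exact plWeight_cons q b (ne_of_gt (hposb b)) (fun i => t i)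
      have hinner : ∀ b : β,
          (∑ t : Fin n ≃ {y : β // y ≠ b}, plWeight q fun j => (glue b t) j) = q b := by
        intro b
        rw [Finset.sum_congr rfl (fun t _ => key b t), ← Finset.mul_sum]
        have h9 := ih _ (fun x : {y : β // y ≠ b} => q x.1 / (1 - q b)) (hcard' b) (hq' b) (hq's b)
        exact (congrArg (fun z => q b * z)
          ((sum_univ_congr _ _ _).trans h9)).trans (mul_one _)
      refine Eq.trans (Finset.sum_congr (g := fun b => q b) rfl fun b _ => ?_)
        (by simpa using hsum)
      exact (sum_univ_congr _ _ _).trans (hinner b)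

lemma div_ratio (a b c : ℝ) (hc : c ≠ 0) : (a / c) / (a / c + b / c) = a / (a + b) := by
  rcases eq_or_ne (a + b) 0 with h | h
  · rw [← add_div, h, zero_div, div_zero, div_zero]
  · field_simp

set_option maxHeartbeats 4000000 in
lemma pl_pair : ∀ (n : ℕ) (β : Type u) [Fintype β] (q : β → ℝ),
    Fintype.card β = n → (∀ a, 0 < q a) → (∑ a, q a) = 1 →
    ∀ u v : β, u ≠ v →
    ∑ s ∈ (univ : Finset (Fin n ≃ β)).filter (fun s => s.symm u < s.symm v),
      plWeight q (fun j => s j) = q u / (q u + q v) := by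
  intro n
  induction n with
  | zero =>
    intro β _ q hcard hpos hsum u v huv
    haveI : IsEmpty β := Fintype.card_eq_zero_iff.mp hcard
    exact absurd hsum (by simp)
  | succ n ih =>
    intro β _ q hcard hpos hsum u v huv
    rcases Nat.eq_zero_or_pos n with hn | hn
    · subst hn
      obtain ⟨b, hb⟩ := Fintype.card_eq_one_iff.mp hcard
      exact absurd ((hb u).trans (hb v).symm) huv
    have hcard' : ∀ b : β, Fintype.card {x : β // x ≠ b} = n := by
      intro b
      have h1 := Fintype.card_subtype_compl (fun x : β => x = b)
      rw [Fintype.card_subtype_eq, hcard] at h1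
      simpa using h1
    have hposb : ∀ b : β, 0 < 1 - q b := by
      intro b
      have h1 : q b + ∑ a ∈ univ.erase b, q a = ∑ a, q a :=
        Finset.add_sum_erase univ q (mem_univ b)
      have hne : (univ.erase b).Nonempty := by
        rw [← Finset.card_pos, Finset.card_erase_of_mem (mem_univ b),
          Finset.card_univ, hcard]
        omega
      have h2 : 0 < ∑ a ∈ univ.erase b, q a :=
        Finset.sum_pos (fun a _ => hpos a) hne
      rw [hsum] at h1
      linarith
    have hsub : ∀ b : β, ∑ x : {x : β // x ≠ b}, q x.1 = 1 - q b := by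
      intro b
      have h0 : ∑ a ∈ univ.filter (fun a => a ≠ b), q a
          = ∑ x : {x : β // x ≠ b}, q x.1 := by
        rw [Finset.sum_subtype (p := fun a : β => a ≠ b) (univ.filter (fun a => a ≠ b)) (by simp) q]
      rw [← h0, Finset.filter_ne', Finset.sum_erase_eq_sub (mem_univ b), hsum]
    have hq' : ∀ b : β, ∀ x : {x : β // x ≠ b}, 0 < q x.1 / (1 - q b) :=
      fun b x => div_pos (hpos x.1) (hposb b)
    have hq's : ∀ b : β, ∑ x : {x : β // x ≠ b}, q x.1 / (1 - q b) = 1 := by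
      intro b
      rw [← Finset.sum_div, hsub b, div_self (ne_of_gt (hposb b))]
    have huvq : q u + q v ≠ 0 := ne_of_gt (add_pos (hpos u) (hpos v))
    have key : ∀ b : β, ∀ t : Fin n ≃ {y : β // y ≠ b},
        plWeight q (fun j => (glue b t) j)
          = q b * plWeight (fun x : {x : β // x ≠ b} => q x.1 / (1 - q b))
              (fun i => t i) := by
      intro b t
      exact plWeight_cons q b (ne_of_gt (hposb b)) (fun i => t i)
    set r : ℝ := q u / (q u + q v) with hr
    -- the inner sums
    have hg : ∀ b : β,
        (∑ t : Fin n ≃ {y : β // y ≠ b},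
          if (glue b t).symm u < (glue b t).symm v then
            plWeight q (fun j => (glue b t) j) else 0)
        = (if b = u then q u else if b = v then 0 else q b * r) := by
      intro b
      by_cases hbu : b = u
      · subst hbu
        rw [if_pos rfl]
        have hcond : ∀ t : Fin n ≃ {y : β // y ≠ b},
            (if (glue b t).symm b < (glue b t).symm v then
              plWeight q (fun j => (glue b t) j) else 0)
            = plWeight q (fun j => (glue b t) j) := by
          intro t
          rw [if_pos]
          rw [glue_symm_same, glue_symm_ne b t v (Ne.symm huv)]
          exact Fin.succ_pos _
        rw [Finset.sum_congr rfl (fun t _ => hcond t),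
          Finset.sum_congr rfl (fun t _ => key b t), ← Finset.mul_sum]
        have h9 := pl_total n _ (fun x : {y : β // y ≠ b} => q x.1 / (1 - q b))
          (hcard' b) (hq' b) (hq's b)
        exact (congrArg (fun z => q b * z)
          ((sum_univ_congr _ _ _).trans h9)).trans (mul_one _)
      · by_cases hbv : b = v
        · subst hbv
          rw [if_neg hbu, if_pos rfl]
          have hcond : ∀ t : Fin n ≃ {y : β // y ≠ b},
              (if (glue b t).symm u < (glue b t).symm b then
                plWeight q (fun j => (glue b t) j) else 0)
              = 0 := by
            intro t
            rw [if_neg]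
            rw [glue_symm_same]
            exact Fin.not_lt_zero _
          rw [Finset.sum_congr rfl (fun t _ => hcond t)]
          simp
        · rw [if_neg hbu, if_neg hbv]
          have hu' : u ≠ b := fun h => hbu h.symm
          have hv' : v ≠ b := fun h => hbv h.symm
          have hcond : ∀ t : Fin n ≃ {y : β // y ≠ b},
              (if (glue b t).symm u < (glue b t).symm v then
                plWeight q (fun j => (glue b t) j) else 0)
              = q b * (if t.symm ⟨u, hu'⟩ < t.symm ⟨v, hv'⟩ then
                  plWeight (fun x : {x : β // x ≠ b} => q x.1 / (1 - q b))
                    (fun i => t i) else 0) := by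
            intro t
            rw [glue_symm_ne b t u hu', glue_symm_ne b t v hv', key b t]
            simp only [Fin.succ_lt_succ_iff, mul_ite, mul_zero]
          rw [Finset.sum_congr rfl (fun t _ => hcond t), ← Finset.mul_sum]
          congr 1
          rw [← Finset.sum_filter]
          have h9 := ih _ (fun x : {y : β // y ≠ b} => q x.1 / (1 - q b))
            (hcard' b) (hq' b) (hq's b) ⟨u, hu'⟩ ⟨v, hv'⟩
            (fun h => huv (congrArg Subtype.val h))
          rw [hr, ← div_ratio (q u) (q v) (1 - q b) (ne_of_gt (hposb b))]
          exact (sum_filter_univ_congr _ _ _ _ _ _).trans h9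
    -- decompose the full sum
    rw [Finset.sum_filter]
    rw [← Fintype.sum_bijective _ glue_bijective
      (fun x : Σ b : β, (Fin n ≃ {y : β // y ≠ b}) =>
        if (glue x.1 x.2).symm u < (glue x.1 x.2).symm v then
          plWeight q (fun j => (glue x.1 x.2) j) else 0)
      _ (fun x => rfl)]
    rw [← Finset.univ_sigma_univ, Finset.sum_sigma]
    refine Eq.trans (Finset.sum_congr
      (g := fun b => if b = u then q u else if b = v then 0 else q b * r)
      rfl fun b _ => ?_) ?_
    · exact (sum_univ_congr _ _ _).trans (hg b)
    · have hsplit : ∀ b : β,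
          (if b = u then q u else if b = v then 0 else q b * r)
          = q b * r + (if b = u then q u - q u * r else 0)
              + (if b = v then -(q v * r) else 0) := by
        intro b
        by_cases h1 : b = u
        · subst h1
          rw [if_pos rfl, if_pos rfl, if_neg huv]
          ring
        · by_cases h2 : b = v
          · subst h2
            rw [if_neg h1, if_pos rfl, if_neg h1, if_pos rfl]
            ring
          · rw [if_neg h1, if_neg h2, if_neg h1, if_neg h2]
            ring
      rw [Finset.sum_congr rfl (fun b _ => hsplit b), Finset.sum_add_distrib,
        Finset.sum_add_distrib, ← Finset.sum_mul, hsum,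
        Finset.sum_ite_eq' univ u (fun _ => q u - q u * r),
        Finset.sum_ite_eq' univ v (fun _ => -(q v * r)),
        if_pos (mem_univ u), if_pos (mem_univ v), hr]
      field_simp
      ring

end PLAux


/-- Full-permutation special case of Proposition 3.1: when `K = m = |α|`, each injective
sequence is a permutation `s : Fin m ≃ α` enumerating all of `α`, and for any `u ≠ v`
the probability under the Plackett–Luce distribution that `u` appears at an earlier
position than `v` equals `p u / (p u + p v)`:
`∑_{s : s⁻¹(u) < s⁻¹(v)} W(s) = p u / (p u + p v)`. -/
theorem plackettLuce_pairwise_rank_permutation {α : Type*} [Fintype α] (p : α → ℝ)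
    (hp : ∀ a, 0 < p a) (hsum : ∑ a, p a = 1)
    (u v : α) (huv : u ≠ v) :
    ∑ s ∈ (univ : Finset (Fin (Fintype.card α) ≃ α)).filter
        (fun s => s.symm u < s.symm v),
      plWeight p (fun j => s j)
    = p u / (p u + p v) := by
  exact PLAux.pl_pair (Fintype.card α) α p rfl hp hsum u v huv
end
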